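/- Exponential contraction in Wasserstein distance for the discrete-time scheme (Theorem 4.3): assume (A3) and set κ₁ = min{κ₊(i,j)+κ₋(i+he_j,j) : j=1,…,d, i,i+he_j∈𝒦_h}. Then for all probability measures ν,η on 𝒦_h and all n∈ℕ: W_{d,1}(νπ^n, ηπ^n) ≤ e^{−κ₁ n τ}·W_{d,1}(ν,η) and W₁(νπ^n, ηπ^n) ≤ √d·e^{−κ₁ n τ}·W₁(ν,η). -/

import Mathlib

open scoped BigOperators Classical RealInnerProductSpace
open Finset MeasureTheory

noncomputable section

/-- Points of the state space `ℝᵈ` with the Euclidean norm. -/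
abbrev Pt (d : ℕ) : Type := EuclideanSpace ℝ (Fin d)

/-- The set `G` of moves `+_j`, `-_j`. -/
inductive Move (d : ℕ) : Type where
  | pos : Fin d → Move d
  | neg : Fin d → Move d
  deriving DecidableEq, Fintype

namespace Move

/-- The direction of a move. -/
def dir {d : ℕ} : Move d → Fin d
  | pos j => j
  | neg j => j

/-- Action of a move on `ℝᵈ`: `(±_j) x = x ± h eⱼ`. -/
def act {d : ℕ} (h : ℝ) : Move d → Pt d → Pt d
  | pos j, x => x + EuclideanSpace.single j h
  | neg j, x => x - EuclideanSpace.single j h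

end Move

/-- Action of a move in `G ∪ {e}` (`none` is the null move `e`). -/
def actO {d : ℕ} (h : ℝ) : Option (Move d) → Pt d → Pt d
  | none, x => x
  | some γ, x => γ.act h x

/-- The grid `𝒦_h` of cell centers, where `N = 2K/h`. -/
def grid (d : ℕ) (K h : ℝ) (N : ℕ) : Finset (Pt d) :=
  Finset.image
    (fun n : Fin d → Fin N =>
      (EuclideanSpace.equiv (Fin d) ℝ).symm fun j => -K + h * ((n j : ℕ) + 1) - h / 2)
    Finset.univ

/-- The averaged potential `V^h`. -/
def Vh {d : ℕ} (h : ℝ) (V : Pt d → ℝ) (x : Pt d) : ℝ :=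
  (1 / h ^ d) * ∫ s in {s : Pt d | ∀ j, s j ∈ Set.Icc (-(h / 2)) (h / 2)}, V (x + s)

/-- The one-dimensional averaged potential `V_j^h`. -/
def Vjh (h : ℝ) (W : ℝ → ℝ) (x : ℝ) : ℝ :=
  (1 / h) * ∫ s in Set.Icc (-(h / 2)) (h / 2), W (x + s)

/-- The transition rates `c(x, γ)`. -/
def rate (d : ℕ) (K h σ : ℝ) (N : ℕ) (V : Pt d → ℝ) (x : Pt d) (γ : Move d) : ℝ :=
  if x ∈ grid d K h N ∧ γ.act h x ∈ grid d K h N then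
    σ ^ 2 / h ^ 2 * Real.exp (-(Vh h V (γ.act h x) - Vh h V x) / (2 * σ ^ 2))
  else 0

/-- The generator `L_h`. -/
def gen (d : ℕ) (K h σ : ℝ) (N : ℕ) (V : Pt d → ℝ) (f : Pt d → ℝ) (i : Pt d) : ℝ :=
  ∑ γ : Move d, rate d K h σ N V i γ * (f (γ.act h i) - f i)

/-- The normalization constant `Z`. -/
def Znorm (d : ℕ) (K h σ : ℝ) (N : ℕ) (V : Pt d → ℝ) : ℝ :=
  ∑ k ∈ grid d K h N, Real.exp (-Vh h V k / σ ^ 2)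

/-- The invariant measure `m_h`. -/
def mh (d : ℕ) (K h σ : ℝ) (N : ℕ) (V : Pt d → ℝ) (i : Pt d) : ℝ :=
  Real.exp (-Vh h V i / σ ^ 2) / Znorm d K h σ N V

/-- `κ₊(i,j)`. -/
def kplus (d : ℕ) (K h σ : ℝ) (N : ℕ) (V : Pt d → ℝ) (i : Pt d) (j : Fin d) : ℝ :=
  rate d K h σ N V i (Move.pos j) - rate d K h σ N V ((Move.pos j).act h i) (Move.pos j)
    - ∑ γ ∈ Finset.univ.filter fun γ : Move d => γ.dir ≠ j,
        max (rate d K h σ N V ((Move.pos j).act h i) γ - rate d K h σ N V i γ) 0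

/-- `κ₋(i,j)`. -/
def kminus (d : ℕ) (K h σ : ℝ) (N : ℕ) (V : Pt d → ℝ) (i : Pt d) (j : Fin d) : ℝ :=
  rate d K h σ N V i (Move.neg j) - rate d K h σ N V ((Move.neg j).act h i) (Move.neg j)
    - ∑ γ ∈ Finset.univ.filter fun γ : Move d => γ.dir ≠ j,
        max (rate d K h σ N V ((Move.neg j).act h i) γ - rate d K h σ N V i γ) 0

/-- Assumption (A3). -/
def A3 (d : ℕ) (K h σ : ℝ) (N : ℕ) (V : Pt d → ℝ) : Prop :=
  (∀ j : Fin d, ∀ i ∈ grid d K h N, (Move.pos j).act h i ∈ grid d K h N →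
      0 < kplus d K h σ N V i j) ∧
  (∀ j : Fin d, ∀ i ∈ grid d K h N, (Move.neg j).act h i ∈ grid d K h N →
      0 < kminus d K h σ N V i j)

/-- `κ_φ = min {κ₊(i,j) + κ₋(i+heⱼ,j)}`. -/
def kappaPhi (d : ℕ) (K h σ : ℝ) (N : ℕ) (V : Pt d → ℝ) : ℝ :=
  sInf { r : ℝ | ∃ j : Fin d, ∃ i ∈ grid d K h N, (Move.pos j).act h i ∈ grid d K h N ∧
    r = kplus d K h σ N V i j + kminus d K h σ N V ((Move.pos j).act h i) j }

/-- The φ-entropy `H^φ(f | m_h)`. -/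
def entPhi (d : ℕ) (K h σ : ℝ) (N : ℕ) (V : Pt d → ℝ) (φ : ℝ → ℝ) (f : Pt d → ℝ) : ℝ :=
  ∑ i ∈ grid d K h N, φ (f i) * mh d K h σ N V i
    - φ (∑ i ∈ grid d K h N, f i * mh d K h σ N V i)

/-- The Dirichlet form `E(f,g)`. -/
def dirichlet (d : ℕ) (K h σ : ℝ) (N : ℕ) (V : Pt d → ℝ) (f g : Pt d → ℝ) : ℝ :=
  -∑ i ∈ grid d K h N, f i * gen d K h σ N V g i * mh d K h σ N V i

/-- Assumption (A1) on the entropy density `φ`. -/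
def A1 (φ : ℝ → ℝ) : Prop :=
  ContinuousOn φ (Set.Ici 0) ∧ (∀ x ∈ Set.Ici (0 : ℝ), 0 ≤ φ x) ∧
  ConvexOn ℝ (Set.Ici 0) φ ∧
  (∀ x ∈ Set.Ioi (0 : ℝ), DifferentiableAt ℝ φ x) ∧
  ContinuousOn (deriv φ) (Set.Ioi 0) ∧
  ConvexOn ℝ (Set.Ioi 0 ×ˢ Set.Ioi 0)
    (fun p : ℝ × ℝ => (deriv φ p.1 - deriv φ p.2) * (p.1 - p.2))

/-- φ is continuous, nonnegative and convex on `[0,∞)`, and C¹ on `(0,∞)`. -/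
def PhiRegular (φ : ℝ → ℝ) : Prop :=
  ContinuousOn φ (Set.Ici 0) ∧ (∀ x ∈ Set.Ici (0 : ℝ), 0 ≤ φ x) ∧
  ConvexOn ℝ (Set.Ici 0) φ ∧
  (∀ x ∈ Set.Ioi (0 : ℝ), DifferentiableAt ℝ φ x) ∧
  ContinuousOn (deriv φ) (Set.Ioi 0)

/-- `f^φ(x, y) = (φ'(f x) - φ'(f y)) (f x - f y)`. -/
def fphi {d : ℕ} (φ : ℝ → ℝ) (f : Pt d → ℝ) (x y : Pt d) : ℝ :=
  (deriv φ (f x) - deriv φ (f y)) * (f x - f y)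

/-- Coupling rates `𝐜(i, i+heⱼ, γ, γ̄)` for the neighboring pair `(i, i+heⱼ)`. -/
def crate (d : ℕ) (K h σ : ℝ) (N : ℕ) (V : Pt d → ℝ) (i : Pt d) (j : Fin d) :
    Option (Move d) → Option (Move d) → ℝ
  | some a, some b =>
      if a = b then min (rate d K h σ N V i a) (rate d K h σ N V ((Move.pos j).act h i) a)
      else if a = Move.pos j ∧ b.dir ≠ j then
        max (rate d K h σ N V ((Move.pos j).act h i) b - rate d K h σ N V i b) 0
      else if a.dir ≠ j ∧ b = Move.neg j then
        max (rate d K h σ N V i a - rate d K h σ N V ((Move.pos j).act h i) a) 0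
      else 0
  | some a, none => if a = Move.pos j then kplus d K h σ N V i j else 0
  | none, some b => if b = Move.neg j then kminus d K h σ N V ((Move.pos j).act h i) j else 0
  | none, none => 0

/-- Coupling rates `𝐜(i, δ i, γ, γ̄)` for an arbitrary move `δ ∈ G`. -/
def cpl (d : ℕ) (K h σ : ℝ) (N : ℕ) (V : Pt d → ℝ) (i : Pt d) (δ : Move d)
    (γ γb : Option (Move d)) : ℝ :=
  match δ with
  | Move.pos j => crate d K h σ N V i j γ γb
  | Move.neg j => crate d K h σ N V ((Move.neg j).act h i) j γb γ

/-- Synchronous coupling rates `𝐜(i, k, γ, γ̄)`. -/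
def syncRate (d : ℕ) (K h σ : ℝ) (N : ℕ) (V : Pt d → ℝ) (i k : Pt d) :
    Option (Move d) → Option (Move d) → ℝ
  | some a, some b => if a = b then min (rate d K h σ N V i a) (rate d K h σ N V k a) else 0
  | some a, none => max (rate d K h σ N V i a - rate d K h σ N V k a) 0
  | none, some b => max (rate d K h σ N V k b - rate d K h σ N V i b) 0
  | none, none => 0

/-- The graph (ℓ¹) distance. -/
def graphDist {d : ℕ} (x y : Pt d) : ℝ := ∑ j, |x j - y j|

/-- The generator matrix `Q`. -/
def Qmat (d : ℕ) (K h σ : ℝ) (N : ℕ) (V : Pt d → ℝ) :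
    Matrix {x // x ∈ grid d K h N} {x // x ∈ grid d K h N} ℝ := fun i k =>
  (∑ γ : Move d, if γ.act h i.1 = k.1 then rate d K h σ N V i.1 γ else 0)
    - (if i = k then ∑ γ : Move d, rate d K h σ N V i.1 γ else 0)

/-- The semigroup `S_t = e^{tQ}` acting on functions. -/
def St (d : ℕ) (K h σ : ℝ) (N : ℕ) (V : Pt d → ℝ) (t : ℝ) (f : Pt d → ℝ) (i : Pt d) : ℝ :=
  if hi : i ∈ grid d K h N then
    ∑ k : {x // x ∈ grid d K h N},
      NormedSpace.exp (t • Qmat d K h σ N V) ⟨i, hi⟩ k * f k.1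
  else 0

/-- The transition function `ν ↦ ν p_t` acting on measures. -/
def measPt (d : ℕ) (K h σ : ℝ) (N : ℕ) (V : Pt d → ℝ) (t : ℝ) (ν : Pt d → ℝ) (k : Pt d) : ℝ :=
  if hk : k ∈ grid d K h N then
    ∑ i : {x // x ∈ grid d K h N},
      ν i.1 * NormedSpace.exp (t • Qmat d K h σ N V) i ⟨k, hk⟩
  else 0

/-- `ν` is a probability measure on the grid. -/
def IsProbOn (d : ℕ) (K h : ℝ) (N : ℕ) (ν : Pt d → ℝ) : Prop :=
  (∀ x ∈ grid d K h N, 0 ≤ ν x) ∧ ∑ x ∈ grid d K h N, ν x = 1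

/-- Optimal transport cost between `ν` and `η` for the cost function `D`. -/
def Wgen (d : ℕ) (K h : ℝ) (N : ℕ) (D : Pt d → Pt d → ℝ) (ν η : Pt d → ℝ) : ℝ :=
  sInf { r : ℝ | ∃ γc : Pt d → Pt d → ℝ,
    (∀ x ∈ grid d K h N, ∀ y ∈ grid d K h N, 0 ≤ γc x y) ∧
    (∀ x ∈ grid d K h N, ∑ y ∈ grid d K h N, γc x y = ν x) ∧
    (∀ y ∈ grid d K h N, ∑ x ∈ grid d K h N, γc x y = η y) ∧
    r = ∑ x ∈ grid d K h N, ∑ y ∈ grid d K h N, D x y * γc x y }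

/-- The `L^p` Wasserstein distance w.r.t. the Euclidean distance. -/
def Wp (d : ℕ) (K h : ℝ) (N : ℕ) (p : ℝ) (ν η : Pt d → ℝ) : ℝ :=
  (Wgen d K h N (fun x y => ‖x - y‖ ^ p) ν η) ^ (1 / p)

/-- The `L¹` Wasserstein distance w.r.t. the Euclidean distance. -/
def W1 (d : ℕ) (K h : ℝ) (N : ℕ) (ν η : Pt d → ℝ) : ℝ :=
  Wgen d K h N (fun x y => ‖x - y‖) ν η

/-- The `L¹` Wasserstein distance w.r.t. the graph distance. -/
def Wd1 (d : ℕ) (K h : ℝ) (N : ℕ) (ν η : Pt d → ℝ) : ℝ :=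
  Wgen d K h N graphDist ν η

/-- The rescaling factor `𝒯 = 2 max_i Σ_γ c(i,γ)`. -/
def Tcal (d : ℕ) (K h σ : ℝ) (N : ℕ) (V : Pt d → ℝ) : ℝ :=
  2 * sSup ((fun i => ∑ γ : Move d, rate d K h σ N V i γ) '' (grid d K h N : Set (Pt d)))

/-- The time step `τ = 1/𝒯`. -/
def tauStep (d : ℕ) (K h σ : ℝ) (N : ℕ) (V : Pt d → ℝ) : ℝ :=
  1 / Tcal d K h σ N V

/-- The rescaled jump rates `p(i,γ) = c(i,γ)/𝒯`. -/
def prate (d : ℕ) (K h σ : ℝ) (N : ℕ) (V : Pt d → ℝ) (i : Pt d) (γ : Move d) : ℝ :=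
  rate d K h σ N V i γ / Tcal d K h σ N V

/-- The transition matrix `π` acting on functions: `(π f)(i) = Σ_k π(i,k) f(k)`. -/
def piStep (d : ℕ) (K h σ : ℝ) (N : ℕ) (V : Pt d → ℝ) (f : Pt d → ℝ) (i : Pt d) : ℝ :=
  f i + ∑ γ : Move d, prate d K h σ N V i γ * (f (γ.act h i) - f i)

/-- The entries `π(i,k)` of the transition matrix. -/
def piKernel (d : ℕ) (K h σ : ℝ) (N : ℕ) (V : Pt d → ℝ) (i k : Pt d) : ℝ :=
  (∑ γ : Move d, if γ.act h i = k then prate d K h σ N V i γ else 0)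
    + (if i = k then 1 - ∑ γ : Move d, prate d K h σ N V i γ else 0)

/-- The transition matrix `π` acting on measures: `(ν π)(k) = Σ_i ν(i) π(i,k)`. -/
def piMeas (d : ℕ) (K h σ : ℝ) (N : ℕ) (V : Pt d → ℝ) (ν : Pt d → ℝ) (k : Pt d) : ℝ :=
  if k ∈ grid d K h N then ∑ i ∈ grid d K h N, ν i * piKernel d K h σ N V i k else 0

/-- The Fisher information `F(f)`. -/
def fisher (d : ℕ) (K h σ : ℝ) (N : ℕ) (V : Pt d → ℝ) (φ : ℝ → ℝ) (f : Pt d → ℝ) : ℝ :=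
  (1 / 2) * ∑ i ∈ grid d K h N, ∑ γ : Move d,
    prate d K h σ N V i γ * (deriv φ (f (γ.act h i)) - deriv φ (f i))
      * (f (γ.act h i) - f i) * mh d K h σ N V i

/-- The entropy densities `φ_α` (with `φ₁(x) = x log x - x + 1`). -/
def phiAlpha (α : ℝ) (x : ℝ) : ℝ :=
  if α = 1 then x * Real.log x - x + 1 else (α - 1)⁻¹ * (x ^ α - x) - x + 1

/-- Assumption (A2): strong `κ`-convexity of `V` on `[-K,K]^d`. -/
def A2 (d : ℕ) (K : ℝ) (V : Pt d → ℝ) (κ : ℝ) : Prop :=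
  ∀ x y : Pt d, (∀ j, |x j| ≤ K) → (∀ j, |y j| ≤ K) →
    κ * ‖x - y‖ ^ 2 ≤ ⟪x - y, gradient V x - gradient V y⟫

/-- `V` is additive with components `Vs j`. -/
def IsAdditive (d : ℕ) (V : Pt d → ℝ) (Vs : Fin d → ℝ → ℝ) : Prop :=
  ∀ x : Pt d, V x = ∑ j, Vs j (x j)

/-- `∇V` is Lipschitz continuous with constant `L` on `[-K,K]^d`. -/
def GradLip (d : ℕ) (K : ℝ) (V : Pt d → ℝ) (L : ℝ) : Prop :=
  ∀ x y : Pt d, (∀ j, |x j| ≤ K) → (∀ j, |y j| ≤ K) →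
    ‖gradient V x - gradient V y‖ ≤ L * ‖x - y‖

/-- The basic assumptions on the discretization parameters. -/
def Params (d : ℕ) (K h σ : ℝ) (N : ℕ) (V : Pt d → ℝ) : Prop :=
  1 ≤ d ∧ 0 < K ∧ 0 < h ∧ (N : ℝ) * h = 2 * K ∧ 0 < σ ∧ ContDiff ℝ 2 V

/-- The discrete-time coupling `𝐩` for the neighboring pair `(i, i+heⱼ)`. -/
def pcoup (d : ℕ) (K h σ : ℝ) (N : ℕ) (V : Pt d → ℝ) (i : Pt d) (j : Fin d)
    (q : Option (Move d) × Option (Move d)) : ℝ :=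
  if q = (none, none) then
    1 - ∑ q' ∈ Finset.univ.filter
          (fun q' : Option (Move d) × Option (Move d) => q' ≠ (none, none)),
        crate d K h σ N V i j q'.1 q'.2 / Tcal d K h σ N V
  else crate d K h σ N V i j q.1 q.2 / Tcal d K h σ N V

end

/-!
Path coupling. For neighbouring grid points `i` and `i + h eⱼ` the coupling rates `crate` move
both walkers in the same direction as often as possible. Only the moves `(+ⱼ, e)` and `(e, -ⱼ)`,
of total probability `(κ₊(i,j) + κ₋(i+heⱼ,j)) τ ≥ κ₁ τ` per step, merge the walkers, and every
other move keeps them at distance `h`. So one step of `π` contracts the expected graph distance of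
neighbours by the factor `1 - κ₁ τ`. Gluing these couplings along shortest grid paths extends this
to all pairs of points, and mixing them along a coupling of `ν` and `η` gives
`W_{d,1}(νπ, ηπ) ≤ (1 - κ₁ τ) W_{d,1}(ν, η) ≤ e^{-κ₁ τ} W_{d,1}(ν, η)`. The Euclidean bound follows
from `|x - y| ≤ dist(x, y) ≤ √d |x - y|`.
-/

namespace FiniteTransport

variable {α : Type*} {S : Finset α}

def IsCoupling (S : Finset α) (μ ν : α → ℝ) (Γ : α → α → ℝ) : Prop :=
  (∀ x ∈ S, ∀ y ∈ S, 0 ≤ Γ x y) ∧ (∀ x ∈ S, ∑ y ∈ S, Γ x y = μ x) ∧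
    ∀ y ∈ S, ∑ x ∈ S, Γ x y = ν y

def couplingCost (S : Finset α) (D Γ : α → α → ℝ) : ℝ :=
  ∑ x ∈ S, ∑ y ∈ S, D x y * Γ x y

noncomputable def transportCost (S : Finset α) (D : α → α → ℝ) (μ ν : α → ℝ) : ℝ :=
  sInf {r | ∃ Γ, IsCoupling S μ ν Γ ∧ r = couplingCost S D Γ}

theorem isCoupling_mul {μ ν : α → ℝ} (hμ : ∀ x ∈ S, 0 ≤ μ x) (hν : ∀ y ∈ S, 0 ≤ ν y)
    (hμ1 : ∑ x ∈ S, μ x = 1) (hν1 : ∑ y ∈ S, ν y = 1) :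
    IsCoupling S μ ν fun x y => μ x * ν y :=
  ⟨fun x hx y hy => mul_nonneg (hμ x hx) (hν y hy),
    fun x _ => by rw [← mul_sum, hν1, mul_one], fun y _ => by rw [← sum_mul, hμ1, one_mul]⟩

theorem IsCoupling.swap {μ ν : α → ℝ} {Γ : α → α → ℝ} (hΓ : IsCoupling S μ ν Γ) :
    IsCoupling S ν μ fun x y => Γ y x :=
  ⟨fun x hx y hy => hΓ.1 y hy x hx, hΓ.2.2, hΓ.2.1⟩

theorem couplingCost_swap {D : α → α → ℝ} (hD : ∀ x y, D x y = D y x) (Γ : α → α → ℝ) :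
    couplingCost S D (fun x y => Γ y x) = couplingCost S D Γ := by
  rw [couplingCost, sum_comm]
  simp only [couplingCost, hD]

theorem exists_coupling_self {D : α → α → ℝ} (hD : ∀ x, D x x = 0) {μ : α → ℝ}
    (hμ : ∀ x ∈ S, 0 ≤ μ x) : ∃ Γ, IsCoupling S μ μ Γ ∧ couplingCost S D Γ = 0 := by
  refine ⟨fun x y => if x = y then μ x else 0, ⟨fun x hx y _ => ?_, fun x hx => ?_,
    fun y hy => ?_⟩, sum_eq_zero fun x _ => sum_eq_zero fun y _ => ?_⟩
  · beta_reduce; split_ifs <;> simp [hμ x hx]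
  · simp [hx]
  · simp [hy]
  · beta_reduce; split_ifs with hxy <;> simp [hxy, hD]

theorem IsCoupling.eq_zero_of_right_eq_zero {μ ν : α → ℝ} {Γ : α → α → ℝ}
    (hΓ : IsCoupling S μ ν Γ) {x y : α} (hx : x ∈ S) (hy : y ∈ S) (h0 : ν y = 0) :
    Γ x y = 0 :=
  (sum_eq_zero_iff_of_nonneg fun x' hx' => hΓ.1 x' hx' y hy).1 ((hΓ.2.2 y hy).trans h0) x hx

theorem IsCoupling.nonneg_right {μ ν : α → ℝ} {Γ : α → α → ℝ} (hΓ : IsCoupling S μ ν Γ) :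
    ∀ y ∈ S, 0 ≤ ν y := fun y hy =>
  hΓ.2.2 y hy ▸ sum_nonneg fun x hx => hΓ.1 x hx y hy

/-- Gluing: the plan `Γ x y = ∑ z, Γ₁ x z * Γ₂ z y / ρ z` routes the mass through the middle
marginal `ρ`. -/
theorem exists_coupling_trans {D : α → α → ℝ}
    (hD : ∀ x ∈ S, ∀ y ∈ S, ∀ z ∈ S, D x z ≤ D x y + D y z) {μ ρ θ : α → ℝ}
    {Γ₁ Γ₂ : α → α → ℝ} (h₁ : IsCoupling S μ ρ Γ₁) (h₂ : IsCoupling S ρ θ Γ₂) :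
    ∃ Γ, IsCoupling S μ θ Γ ∧
      couplingCost S D Γ ≤ couplingCost S D Γ₁ + couplingCost S D Γ₂ := by
  set w : α → α → α → ℝ := fun x z y => if ρ z = 0 then 0 else Γ₁ x z * Γ₂ z y / ρ z
  have hw : ∀ x ∈ S, ∀ z ∈ S, ∀ y ∈ S, 0 ≤ w x z y := fun x hx z hz y hy => by
    simp only [w]
    split_ifs
    · exact le_rfl
    · exact div_nonneg (mul_nonneg (h₁.1 x hx z hz) (h₂.1 z hz y hy)) (h₁.nonneg_right z hz)
  have hrow : ∀ x ∈ S, ∀ z ∈ S, ∑ y ∈ S, w x z y = Γ₁ x z := fun x hx z hz => by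
    by_cases h0 : ρ z = 0
    · simp [w, h0, h₁.eq_zero_of_right_eq_zero hx hz h0]
    · simp only [w, if_neg h0, ← sum_div, ← mul_sum, h₂.2.1 z hz, mul_div_cancel_right₀ _ h0]
  have hcol : ∀ y ∈ S, ∀ z ∈ S, ∑ x ∈ S, w x z y = Γ₂ z y := fun y hy z hz => by
    by_cases h0 : ρ z = 0
    · simp [w, h0, h₂.swap.eq_zero_of_right_eq_zero hy hz h0]
    · simp only [w, if_neg h0, ← sum_div, ← sum_mul, h₁.2.2 z hz, mul_div_cancel_left₀ _ h0]
  refine ⟨fun x y => ∑ z ∈ S, w x z y,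
    ⟨fun x hx y hy => sum_nonneg fun z hz => hw x hx z hz y hy, fun x hx => ?_,
      fun y hy => ?_⟩, ?_⟩
  · rw [sum_comm, sum_congr rfl (hrow x hx), h₁.2.1 x hx]
  · rw [sum_comm, sum_congr rfl (hcol y hy), h₂.2.2 y hy]
  calc couplingCost S D (fun x y => ∑ z ∈ S, w x z y)
      ≤ ∑ x ∈ S, ∑ y ∈ S, ∑ z ∈ S, (D x z + D z y) * w x z y := by
        refine sum_le_sum fun x hx => sum_le_sum fun y hy => ?_
        rw [mul_sum]
        exact sum_le_sum fun z hz =>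
          mul_le_mul_of_nonneg_right (hD x hx z hz y hy) (hw x hx z hz y hy)
    _ = ∑ x ∈ S, ∑ z ∈ S, D x z * ∑ y ∈ S, w x z y
          + ∑ y ∈ S, ∑ z ∈ S, D z y * ∑ x ∈ S, w x z y := by
        simp only [add_mul, sum_add_distrib, mul_sum]
        congr 1
        · exact sum_congr rfl fun x _ => sum_comm
        · rw [sum_comm]; exact sum_congr rfl fun y _ => sum_comm
    _ = couplingCost S D Γ₁ + couplingCost S D Γ₂ := by
        rw [couplingCost, couplingCost, sum_comm (s := S) (t := S) (f := fun z y => D z y * Γ₂ z y)]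
        congr 1
        · exact sum_congr rfl fun x hx => sum_congr rfl fun z hz => by rw [hrow x hx z hz]
        · exact sum_congr rfl fun y hy => sum_congr rfl fun z hz => by rw [hcol y hy z hz]

theorem couplingCost_nonneg {D Γ : α → α → ℝ} (hD : ∀ x ∈ S, ∀ y ∈ S, 0 ≤ D x y)
    (hΓ : ∀ x ∈ S, ∀ y ∈ S, 0 ≤ Γ x y) : 0 ≤ couplingCost S D Γ :=
  sum_nonneg fun x hx => sum_nonneg fun y hy => mul_nonneg (hD x hx y hy) (hΓ x hx y hy)

theorem transportCost_nonneg {D : α → α → ℝ} (hD : ∀ x ∈ S, ∀ y ∈ S, 0 ≤ D x y)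
    (μ ν : α → ℝ) : 0 ≤ transportCost S D μ ν :=
  Real.sInf_nonneg fun _ ⟨_, hΓ, hr⟩ => hr ▸ couplingCost_nonneg hD hΓ.1

theorem transportCost_le {D : α → α → ℝ} (hD : ∀ x ∈ S, ∀ y ∈ S, 0 ≤ D x y)
    {μ ν : α → ℝ} {Γ : α → α → ℝ} (hΓ : IsCoupling S μ ν Γ) :
    transportCost S D μ ν ≤ couplingCost S D Γ :=
  csInf_le ⟨0, fun _ ⟨_, hΓ', hr⟩ => hr ▸ couplingCost_nonneg hD hΓ'.1⟩ ⟨Γ, hΓ, rfl⟩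

theorem le_mul_transportCost {D : α → α → ℝ} {μ ν : α → ℝ} {A c : ℝ} (hc : 0 ≤ c)
    (hne : ∃ Γ, IsCoupling S μ ν Γ)
    (hA : ∀ Γ, IsCoupling S μ ν Γ → A ≤ c * couplingCost S D Γ) :
    A ≤ c * transportCost S D μ ν := by
  obtain ⟨Γ₀, hΓ₀⟩ := hne
  rw [transportCost, ← smul_eq_mul, ← Real.sInf_smul_of_nonneg hc]
  refine le_csInf ⟨_, _, ⟨Γ₀, hΓ₀, rfl⟩, rfl⟩ ?_
  rintro _ ⟨_, ⟨Γ, hΓ, rfl⟩, rfl⟩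
  exact hA Γ hΓ

theorem transportCost_le_mul {D D' : α → α → ℝ} {c : ℝ} (hc : 0 ≤ c)
    (hD : ∀ x ∈ S, ∀ y ∈ S, 0 ≤ D x y) (hDD' : ∀ x ∈ S, ∀ y ∈ S, D x y ≤ c * D' x y)
    {μ ν : α → ℝ} (hne : ∃ Γ, IsCoupling S μ ν Γ) :
    transportCost S D μ ν ≤ c * transportCost S D' μ ν :=
  le_mul_transportCost hc hne fun Γ hΓ => (transportCost_le hD hΓ).trans <| by
    rw [couplingCost, couplingCost, mul_sum]
    refine sum_le_sum fun x hx => ?_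
    rw [mul_sum]
    exact sum_le_sum fun y hy => by
      rw [← mul_assoc]; exact mul_le_mul_of_nonneg_right (hDD' x hx y hy) (hΓ.1 x hx y hy)

/-- Mix the couplings of the rows `P x`, `P y` along an arbitrary coupling of `μ` and `ν`. -/
theorem transportCost_kernel_le {D P : α → α → ℝ} {c : ℝ} (hc : 0 ≤ c)
    (hD : ∀ x ∈ S, ∀ y ∈ S, 0 ≤ D x y)
    (hP : ∀ x ∈ S, ∀ y ∈ S, ∃ Γ, IsCoupling S (P x) (P y) Γ ∧ couplingCost S D Γ ≤ c * D x y)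
    {μ ν μ' ν' : α → ℝ} (hne : ∃ Γ, IsCoupling S μ ν Γ)
    (hμ' : ∀ k ∈ S, μ' k = ∑ i ∈ S, μ i * P i k) (hν' : ∀ k ∈ S, ν' k = ∑ i ∈ S, ν i * P i k) :
    transportCost S D μ' ν' ≤ c * transportCost S D μ ν := by
  choose! F hF hFcost using hP
  refine le_mul_transportCost hc hne fun Γ hΓ => ?_
  set Γ' : α → α → ℝ := fun x' y' => ∑ x ∈ S, ∑ y ∈ S, Γ x y * F x y x' y'
  have hΓ' : IsCoupling S μ' ν' Γ' := by
    refine ⟨fun x' hx' y' hy' => sum_nonneg fun x hx => sum_nonneg fun y hy =>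
      mul_nonneg (hΓ.1 x hx y hy) ((hF x hx y hy).1 x' hx' y' hy'), fun x' hx' => ?_,
      fun y' hy' => ?_⟩
    · calc ∑ y' ∈ S, Γ' x' y' = ∑ x ∈ S, ∑ y ∈ S, ∑ y' ∈ S, Γ x y * F x y x' y' := by
            rw [sum_comm]; exact sum_congr rfl fun x _ => sum_comm
        _ = ∑ x ∈ S, μ x * P x x' := sum_congr rfl fun x hx => by
            rw [sum_congr rfl fun y hy => by rw [← mul_sum, (hF x hx y hy).2.1 x' hx'],
              ← sum_mul, hΓ.2.1 x hx]
        _ = μ' x' := (hμ' x' hx').symm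
    · calc ∑ x' ∈ S, Γ' x' y' = ∑ x ∈ S, ∑ y ∈ S, ∑ x' ∈ S, Γ x y * F x y x' y' := by
            rw [sum_comm]; exact sum_congr rfl fun x _ => sum_comm
        _ = ∑ x ∈ S, ∑ y ∈ S, Γ x y * P y y' := sum_congr rfl fun x hx =>
            sum_congr rfl fun y hy => by rw [← mul_sum, (hF x hx y hy).2.2 y' hy']
        _ = ν' y' := by
            rw [sum_comm, hν' y' hy']
            exact sum_congr rfl fun y hy => by rw [← sum_mul, hΓ.2.2 y hy]
  refine (transportCost_le hD hΓ').trans ?_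
  calc couplingCost S D Γ'
      = ∑ x ∈ S, ∑ y ∈ S, Γ x y * couplingCost S D (F x y) := by
        simp only [couplingCost, Γ', mul_sum]
        rw [sum_congr rfl fun _ _ => sum_comm, sum_comm]
        refine sum_congr rfl fun _ _ => ?_
        rw [sum_congr rfl fun _ _ => sum_comm, sum_comm]
        exact sum_congr rfl fun _ _ => sum_congr rfl fun _ _ => sum_congr rfl fun _ _ => by ring
    _ ≤ ∑ x ∈ S, ∑ y ∈ S, Γ x y * (c * D x y) :=
        sum_le_sum fun x hx => sum_le_sum fun y hy =>
          mul_le_mul_of_nonneg_left (hFcost x hx y hy) (hΓ.1 x hx y hy)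
    _ = c * couplingCost S D Γ := by
        simp only [couplingCost, mul_sum]
        exact sum_congr rfl fun x _ => sum_congr rfl fun y _ => by ring

section Pushforward

variable {ι : Type*} [Fintype ι] [DecidableEq α]

noncomputable def pushCoupling (X Y : ι → α) (p : ι → ℝ) (x y : α) : ℝ :=
  ∑ q, if X q = x ∧ Y q = y then p q else 0

theorem sum_pushforward {Z : ι → α} {p : ι → ℝ} (hZ : ∀ q, p q ≠ 0 → Z q ∈ S) :
    ∑ k ∈ S, ∑ q, (if Z q = k then p q else 0) = ∑ q, p q := by
  rw [sum_comm]
  refine sum_congr rfl fun q _ => ?_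
  rw [sum_ite_eq]
  by_cases hq : p q = 0
  · simp [hq]
  · rw [if_pos (hZ q hq)]

theorem isCoupling_pushCoupling {X Y : ι → α} {p : ι → ℝ} {μ ν : α → ℝ}
    (hp : ∀ q, 0 ≤ p q) (hsupp : ∀ q, p q ≠ 0 → X q ∈ S ∧ Y q ∈ S)
    (hμ : ∀ x ∈ S, ∑ q, (if X q = x then p q else 0) = μ x)
    (hν : ∀ y ∈ S, ∑ q, (if Y q = y then p q else 0) = ν y) :
    IsCoupling S μ ν (pushCoupling X Y p) := by
  refine ⟨fun x _ y _ => sum_nonneg fun q _ => ?_, fun x hx => ?_, fun y hy => ?_⟩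
  · split_ifs
    exacts [hp q, le_rfl]
  · rw [← hμ x hx, ← sum_pushforward (Z := Y) fun q hq => (hsupp q (ite_ne_right_iff.1 hq).2).2]
    exact sum_congr rfl fun y _ => sum_congr rfl fun q _ => by
      simp only [and_comm (a := X q = x), ite_and]
  · rw [← hν y hy, ← sum_pushforward (Z := X) fun q hq =>
      (hsupp q (ite_ne_right_iff.1 hq).2).1]
    simp only [pushCoupling, ite_and]

theorem couplingCost_pushCoupling {X Y : ι → α} {p : ι → ℝ}
    (hsupp : ∀ q, p q ≠ 0 → X q ∈ S ∧ Y q ∈ S) (D : α → α → ℝ) :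
    couplingCost S D (pushCoupling X Y p) = ∑ q, D (X q) (Y q) * p q := by
  have hsupp' : ∀ q, D (X q) (Y q) * p q ≠ 0 → X q ∈ S ∧ Y q ∈ S :=
    fun q hq => hsupp q (right_ne_zero_of_mul hq)
  rw [← sum_pushforward (Z := X) fun q hq => (hsupp' q hq).1]
  refine sum_congr rfl fun x _ => ?_
  rw [← sum_pushforward (Z := Y) fun q hq => (hsupp' q (ite_ne_right_iff.1 hq).2).2]
  simp only [pushCoupling, mul_sum]
  refine sum_congr rfl fun y _ => sum_congr rfl fun q _ => ?_
  by_cases hx : X q = x <;> by_cases hy : Y q = y <;> simp [hx, hy]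

end Pushforward

end FiniteTransport

open FiniteTransport in
theorem Wgen_eq_transportCost {d : ℕ} {K h : ℝ} {N : ℕ} (D : Pt d → Pt d → ℝ)
    (ν η : Pt d → ℝ) : Wgen d K h N D ν η = transportCost (grid d K h N) D ν η := by
  simp only [Wgen, transportCost, IsCoupling, couplingCost, and_assoc]

theorem max_sub_zero_add_min (x y : ℝ) : max (x - y) 0 + min x y = x := by
  rcases le_total x y with hxy | hxy
  · rw [max_eq_right (sub_nonpos.2 hxy), min_eq_left hxy, zero_add]
  · rw [max_eq_left (sub_nonneg.2 hxy), min_eq_right hxy, sub_add_cancel]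

theorem sum_max_sub_nonneg {ι : Type*} (s : Finset ι) (f g : ι → ℝ) :
    0 ≤ ∑ x ∈ s, max (f x - g x) 0 :=
  sum_nonneg fun _ _ => le_max_right _ _

theorem iterate_le_pow_mul {β : Type*} {F : β → β} {P : β → Prop} {D : β → β → ℝ} {c : ℝ}
    (hc : 0 ≤ c) (hP : ∀ a, P a → P (F a)) (hD : ∀ a b, P a → P b → D (F a) (F b) ≤ c * D a b)
    (n : ℕ) {a b : β} (ha : P a) (hb : P b) : D (F^[n] a) (F^[n] b) ≤ c ^ n * D a b := by
  induction n generalizing a b with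
  | zero => simp
  | succ n ih =>
    rw [Function.iterate_succ_apply, Function.iterate_succ_apply, pow_succ, mul_assoc]
    exact (ih (hP a ha) (hP b hb)).trans
      (mul_le_mul_of_nonneg_left (hD a b ha hb) (pow_nonneg hc n))

section LazyChain

variable {ι : Type*} [Fintype ι]

noncomputable def lazyStep (r : ι → ℝ) (T : ℝ) : Option ι → ℝ
  | none => 1 - ∑ a, r a / T
  | some a => r a / T

theorem sum_lazyStep (r : ι → ℝ) (T : ℝ) : ∑ o, lazyStep r T o = 1 := by
  simp [Fintype.sum_option, lazyStep]

theorem lazyStep_nonneg {r : ι → ℝ} {T : ℝ} (hr : ∀ a, 0 ≤ r a) (hT : 0 ≤ T)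
    (hrT : ∑ a, r a ≤ T) (o : Option ι) : 0 ≤ lazyStep r T o := by
  cases o with
  | none =>
    rw [lazyStep, sub_nonneg, ← sum_div]
    exact div_le_one_of_le₀ hrT hT
  | some a => exact div_nonneg (hr a) hT

variable [DecidableEq ι]

noncomputable def lazyJoint (C : Option ι → Option ι → ℝ) (T : ℝ) (q : Option ι × Option ι) : ℝ :=
  if q = (none, none) then
    1 - ∑ q' ∈ univ.filter (fun q' : Option ι × Option ι => q' ≠ (none, none)), C q'.1 q'.2 / T
  else C q.1 q.2 / T

theorem lazyJoint_of_ne {C : Option ι → Option ι → ℝ} {T : ℝ} {q : Option ι × Option ι}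
    (hq : q ≠ (none, none)) : lazyJoint C T q = C q.1 q.2 / T :=
  if_neg hq

theorem lazyJoint_none_none {C : Option ι → Option ι → ℝ} {T : ℝ} (hC : C none none = 0) :
    lazyJoint C T (none, none) = 1 - (∑ o, ∑ o', C o o') / T := by
  rw [lazyJoint, if_pos rfl, ← sum_div, ← Fintype.sum_prod_type',
    sum_filter_of_ne (p := fun q => q ≠ (none, none)) fun q _ hq => by rintro rfl; exact hq hC]

theorem lazyJoint_nonneg {C : Option ι → Option ι → ℝ} {T : ℝ} (hC : ∀ o o', 0 ≤ C o o')
    (hC0 : C none none = 0) (hT : 0 ≤ T) (hCT : ∑ o, ∑ o', C o o' ≤ T)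
    (q : Option ι × Option ι) : 0 ≤ lazyJoint C T q := by
  obtain rfl | hq := eq_or_ne q (none, none)
  · rw [lazyJoint_none_none hC0, sub_nonneg]
    exact div_le_one_of_le₀ hCT hT
  · rw [lazyJoint_of_ne hq]
    exact div_nonneg (hC _ _) hT

theorem sum_lazyJoint_fst {C : Option ι → Option ι → ℝ} {r : ι → ℝ} (T : ℝ)
    (hC0 : C none none = 0) (hr : ∀ a, ∑ o', C (some a) o' = r a) (o : Option ι) :
    ∑ o', lazyJoint C T (o, o') = lazyStep r T o := by
  cases o with
  | none =>
    rw [Fintype.sum_option, lazyJoint_none_none hC0,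
      sum_congr rfl fun b _ => lazyJoint_of_ne (by simp), Fintype.sum_option, Fintype.sum_option,
      hC0, lazyStep, sum_congr rfl fun a _ => hr a]
    simp only [sum_div, add_div]
    ring
  | some a =>
    rw [sum_congr rfl fun o' _ => lazyJoint_of_ne (by simp), ← sum_div, hr, lazyStep]

theorem sum_lazyJoint_snd {C : Option ι → Option ι → ℝ} {s : ι → ℝ} (T : ℝ)
    (hC0 : C none none = 0) (hs : ∀ b, ∑ o, C o (some b) = s b) (o' : Option ι) :
    ∑ o, lazyJoint C T (o, o') = lazyStep s T o' := by
  cases o' with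
  | none =>
    rw [Fintype.sum_option, lazyJoint_none_none hC0,
      sum_congr rfl fun a _ => lazyJoint_of_ne (by simp), sum_comm, Fintype.sum_option,
      Fintype.sum_option, hC0, lazyStep, sum_congr rfl fun b _ => hs b]
    simp only [sum_div, add_div]
    ring
  | some b =>
    rw [sum_congr rfl fun o _ => lazyJoint_of_ne (by simp), ← sum_div, hs, lazyStep]

end LazyChain

section GridGeometry

variable {d : ℕ} {K h : ℝ} {N : ℕ}

theorem graphDist_nonneg (x y : Pt d) : 0 ≤ graphDist x y :=
  sum_nonneg fun _ _ => abs_nonneg _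

theorem graphDist_self (x : Pt d) : graphDist x x = 0 := by simp [graphDist]

theorem graphDist_comm (x y : Pt d) : graphDist x y = graphDist y x := by
  simp only [graphDist, abs_sub_comm]

theorem graphDist_triangle (x y z : Pt d) : graphDist x z ≤ graphDist x y + graphDist y z := by
  rw [graphDist, graphDist, graphDist, ← sum_add_distrib]
  exact sum_le_sum fun k _ => abs_sub_le _ _ _

theorem Move.act_apply_of_ne {γ : Move d} {k : Fin d} (hk : k ≠ γ.dir) (x : Pt d) :
    γ.act h x k = x k := by
  cases γ <;> simp_all [Move.act, Move.dir]

theorem Move.act_pos_apply (j : Fin d) (x : Pt d) : (Move.pos j).act h x j = x j + h := by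
  simp [Move.act]

theorem Move.act_neg_apply (j : Fin d) (x : Pt d) : (Move.neg j).act h x j = x j - h := by
  simp [Move.act]

theorem Move.act_neg_act_pos (j : Fin d) (x : Pt d) :
    (Move.neg j).act h ((Move.pos j).act h x) = x :=
  add_sub_cancel_right x _

theorem Move.act_pos_act_neg (j : Fin d) (x : Pt d) :
    (Move.pos j).act h ((Move.neg j).act h x) = x :=
  sub_add_cancel x _

theorem graphDist_act_act (γ : Move d) (x y : Pt d) :
    graphDist (γ.act h x) (γ.act h y) = graphDist x y := by
  cases γ <;> simp [graphDist, Move.act]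

theorem graphDist_act_right (γ : Move d) (x : Pt d) : graphDist x (γ.act h x) = |h| := by
  cases γ <;> simp [graphDist, Move.act, apply_ite]

theorem mem_grid_iff {x : Pt d} :
    x ∈ grid d K h N ↔ ∀ j, ∃ n : Fin N, x j = -K + h * ((n : ℕ) + 1) - h / 2 := by
  simp only [grid, mem_image, mem_univ, true_and]
  constructor
  · rintro ⟨n, rfl⟩ j
    exact ⟨n j, rfl⟩
  · intro hx
    choose n hn using hx
    exact ⟨n, PiLp.ext fun j => (hn j).symm⟩

theorem graphDist_of_eq_of_ne {j : Fin d} {x x' : Pt d} (hx : ∀ k ≠ j, x' k = x k) (y : Pt d) :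
    graphDist x' y = graphDist x y + (|x' j - y j| - |x j - y j|) := by
  rw [graphDist, graphDist, ← add_sum_erase _ _ (mem_univ j), ← add_sum_erase _ _ (mem_univ j),
    sum_congr rfl fun k hk => by rw [hx k (ne_of_mem_erase hk)]]
  ring

theorem exists_move_toward (hh : 0 < h) {x y : Pt d} (hx : x ∈ grid d K h N)
    (hy : y ∈ grid d K h N) (hxy : x ≠ y) :
    ∃ γ : Move d, γ.act h x ∈ grid d K h N ∧ graphDist (γ.act h x) y + h = graphDist x y := by
  obtain ⟨j, hj⟩ : ∃ j, x j ≠ y j := by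
    by_contra! hxy'
    exact hxy (PiLp.ext hxy')
  obtain ⟨n, hn⟩ := mem_grid_iff.1 hx j
  obtain ⟨m, hm⟩ := mem_grid_iff.1 hy j
  have hmem : ∀ γ : Move d, γ.dir = j →
      (∃ n' : Fin N, γ.act h x j = -K + h * ((n' : ℕ) + 1) - h / 2) →
      γ.act h x ∈ grid d K h N := by
    intro γ hγ hn'
    refine mem_grid_iff.2 fun k => ?_
    by_cases hk : k = j
    · exact hk ▸ hn'
    · rw [Move.act_apply_of_ne (hγ ▸ hk)]
      exact mem_grid_iff.1 hx k
  rcases lt_or_gt_of_ne (fun e : (n : ℕ) = m => hj (by rw [hn, hm, e])) with hnm | hnm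
  · refine ⟨Move.pos j, hmem _ rfl ⟨⟨n + 1, by omega⟩, ?_⟩, ?_⟩
    · rw [Move.act_pos_apply, hn]; push_cast; ring
    · have : (n : ℝ) + 1 ≤ m := by exact_mod_cast hnm
      rw [graphDist_of_eq_of_ne (j := j) (fun k hk => Move.act_apply_of_ne hk x),
        Move.act_pos_apply,
        abs_of_nonpos (by rw [hn, hm]; nlinarith), abs_of_nonpos (by rw [hn, hm]; nlinarith)]
      ring
  · refine ⟨Move.neg j, hmem _ rfl ⟨⟨n - 1, by omega⟩, ?_⟩, ?_⟩
    · rw [Move.act_neg_apply, hn, Nat.cast_pred (by omega)]; ring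
    · have : (m : ℝ) + 1 ≤ n := by exact_mod_cast hnm
      rw [graphDist_of_eq_of_ne (j := j) (fun k hk => Move.act_apply_of_ne hk x),
        Move.act_neg_apply,
        abs_of_nonneg (by rw [hn, hm]; nlinarith), abs_of_nonneg (by rw [hn, hm]; nlinarith)]
      ring

end GridGeometry

open FiniteTransport

section PathCoupling

variable {d : ℕ} {K h : ℝ} {N : ℕ}

theorem exists_coupling_of_move {P : Pt d → Pt d → ℝ} {c : ℝ}
    (hadj : ∀ x ∈ grid d K h N, ∀ j, (Move.pos j).act h x ∈ grid d K h N →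
      ∃ Γ, IsCoupling (grid d K h N) (P x) (P ((Move.pos j).act h x)) Γ ∧
        couplingCost (grid d K h N) graphDist Γ ≤ c * h)
    {x : Pt d} (hx : x ∈ grid d K h N) {γ : Move d} (hγ : γ.act h x ∈ grid d K h N) :
    ∃ Γ, IsCoupling (grid d K h N) (P x) (P (γ.act h x)) Γ ∧
      couplingCost (grid d K h N) graphDist Γ ≤ c * h := by
  rcases γ with j | j
  · exact hadj x hx j hγ
  · obtain ⟨Γ, hΓ, hcost⟩ := hadj _ hγ j (by rwa [Move.act_pos_act_neg])
    rw [Move.act_pos_act_neg] at hΓ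
    exact ⟨_, hΓ.swap, (couplingCost_swap graphDist_comm Γ).trans_le hcost⟩

/-- Path coupling: glue the couplings of neighbouring rows along a shortest grid path. -/
theorem exists_coupling_of_adjacent (hh : 0 < h) {P : Pt d → Pt d → ℝ} {c : ℝ}
    (hP : ∀ x ∈ grid d K h N, ∀ y ∈ grid d K h N, 0 ≤ P x y)
    (hadj : ∀ x ∈ grid d K h N, ∀ j, (Move.pos j).act h x ∈ grid d K h N →
      ∃ Γ, IsCoupling (grid d K h N) (P x) (P ((Move.pos j).act h x)) Γ ∧
        couplingCost (grid d K h N) graphDist Γ ≤ c * h)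
    {x y : Pt d} (hx : x ∈ grid d K h N) (hy : y ∈ grid d K h N) :
    ∃ Γ, IsCoupling (grid d K h N) (P x) (P y) Γ ∧
      couplingCost (grid d K h N) graphDist Γ ≤ c * graphDist x y := by
  have hdiag : ∀ x ∈ grid d K h N, ∃ Γ, IsCoupling (grid d K h N) (P x) (P x) Γ ∧
      couplingCost (grid d K h N) graphDist Γ ≤ c * graphDist x x := fun x hx => by
    obtain ⟨Γ, hΓ, h0⟩ := exists_coupling_self graphDist_self (hP x hx)
    exact ⟨Γ, hΓ, by rw [h0, graphDist_self, mul_zero]⟩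
  suffices ∀ m : ℕ, ∀ x ∈ grid d K h N, ∀ y ∈ grid d K h N, graphDist x y ≤ m * h →
      ∃ Γ, IsCoupling (grid d K h N) (P x) (P y) Γ ∧
        couplingCost (grid d K h N) graphDist Γ ≤ c * graphDist x y from
    this _ x hx y hy ((div_le_iff₀ hh).1 (Nat.le_ceil _))
  intro m
  induction m with
  | zero =>
    intro x hx y hy hxy
    obtain rfl : x = y := by
      by_contra hne
      obtain ⟨γ, -, hγ⟩ := exists_move_toward hh hx hy hne
      linarith [graphDist_nonneg (γ.act h x) y, show graphDist x y ≤ 0 by simpa using hxy]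
    exact hdiag x hx
  | succ m ih =>
    intro x hx y hy hxy
    obtain rfl | hne := eq_or_ne x y
    · exact hdiag x hx
    obtain ⟨γ, hγ, hdist⟩ := exists_move_toward hh hx hy hne
    obtain ⟨Γ₁, hΓ₁, hc₁⟩ := exists_coupling_of_move hadj hx hγ
    obtain ⟨Γ₂, hΓ₂, hc₂⟩ := ih _ hγ y hy (by push_cast at hxy; linarith)
    obtain ⟨Γ, hΓ, hc⟩ :=
      exists_coupling_trans (fun x _ y _ z _ => graphDist_triangle x y z) hΓ₁ hΓ₂
    exact ⟨Γ, hΓ, by rw [← hdist, mul_add]; linarith⟩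

end PathCoupling

section Rates

variable {d : ℕ} {K h σ : ℝ} {N : ℕ} {V : Pt d → ℝ}

theorem rate_nonneg (x : Pt d) (γ : Move d) : 0 ≤ rate d K h σ N V x γ := by
  unfold rate
  split_ifs
  exacts [by positivity, le_rfl]

theorem mem_grid_of_rate_ne_zero {x : Pt d} {γ : Move d} (hγ : rate d K h σ N V x γ ≠ 0) :
    γ.act h x ∈ grid d K h N := by
  by_contra hx
  exact hγ (by simp [rate, hx])

theorem sum_rate_le {x : Pt d} (hx : x ∈ grid d K h N) :
    ∑ γ, rate d K h σ N V x γ ≤ Tcal d K h σ N V / 2 := by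
  have hbdd := ((grid d K h N).finite_toSet.image
    fun i => ∑ γ, rate d K h σ N V i γ).bddAbove
  have := le_csSup hbdd (Set.mem_image_of_mem _ (mem_coe.2 hx))
  rw [Tcal]
  linarith

theorem rate_le {x : Pt d} (hx : x ∈ grid d K h N) (γ : Move d) :
    rate d K h σ N V x γ ≤ Tcal d K h σ N V / 2 :=
  (single_le_sum (fun γ _ => rate_nonneg x γ) (mem_univ γ)).trans (sum_rate_le hx)

theorem Tcal_nonneg : 0 ≤ Tcal d K h σ N V :=
  mul_nonneg zero_le_two <| Real.sSup_nonneg <| by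
    rintro _ ⟨x, -, rfl⟩
    exact sum_nonneg fun γ _ => rate_nonneg x γ

theorem piKernel_eq_sum (i k : Pt d) :
    piKernel d K h σ N V i k = ∑ o, if actO h o i = k then
      lazyStep (rate d K h σ N V i) (Tcal d K h σ N V) o else 0 := by
  rw [Fintype.sum_option, add_comm]
  rfl

theorem mem_grid_of_lazyStep_ne_zero {i : Pt d} (hi : i ∈ grid d K h N) {o : Option (Move d)}
    (ho : lazyStep (rate d K h σ N V i) (Tcal d K h σ N V) o ≠ 0) :
    actO h o i ∈ grid d K h N := by
  cases o with
  | none => exact hi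
  | some γ => exact mem_grid_of_rate_ne_zero (left_ne_zero_of_mul ho)

theorem lazyStep_rate_nonneg {i : Pt d} (hi : i ∈ grid d K h N) (o : Option (Move d)) :
    0 ≤ lazyStep (rate d K h σ N V i) (Tcal d K h σ N V) o := by
  have hT : 0 ≤ Tcal d K h σ N V := Tcal_nonneg
  exact lazyStep_nonneg (rate_nonneg i) hT (by linarith [sum_rate_le (σ := σ) (V := V) hi]) o

theorem piKernel_nonneg {i : Pt d} (hi : i ∈ grid d K h N) (k : Pt d) :
    0 ≤ piKernel d K h σ N V i k := by
  rw [piKernel_eq_sum]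
  exact sum_nonneg fun o _ => by split_ifs; exacts [lazyStep_rate_nonneg hi o, le_rfl]

theorem sum_piKernel {i : Pt d} (hi : i ∈ grid d K h N) :
    ∑ k ∈ grid d K h N, piKernel d K h σ N V i k = 1 := by
  simp only [piKernel_eq_sum]
  rw [sum_pushforward (Z := fun o => actO h o i)
    fun o => mem_grid_of_lazyStep_ne_zero (σ := σ) (V := V) hi, sum_lazyStep]

theorem isProbOn_piMeas {ν : Pt d → ℝ} (hν : IsProbOn d K h N ν) :
    IsProbOn d K h N (piMeas d K h σ N V ν) := by
  refine ⟨fun k hk => ?_, ?_⟩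
  · rw [piMeas, if_pos hk]
    exact sum_nonneg fun i hi => mul_nonneg (hν.1 i hi) (piKernel_nonneg hi k)
  · rw [sum_congr rfl fun k hk => by rw [piMeas, if_pos hk], sum_comm, ← hν.2]
    exact sum_congr rfl fun i hi => by rw [← mul_sum, sum_piKernel hi, mul_one]

end Rates

section CouplingRates

variable {d : ℕ} {K h σ : ℝ} {N : ℕ} {V : Pt d → ℝ} {i : Pt d} {j : Fin d}

@[simp] theorem Move.dir_pos (j : Fin d) : (Move.pos j).dir = j := rfl

@[simp] theorem Move.dir_neg (j : Fin d) : (Move.neg j).dir = j := rfl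

theorem Move.ne_pos_of_dir_ne {a : Move d} {j : Fin d} (ha : a.dir ≠ j) : a ≠ Move.pos j := by
  rintro rfl; exact ha rfl

theorem Move.ne_neg_of_dir_ne {a : Move d} {j : Fin d} (ha : a.dir ≠ j) : a ≠ Move.neg j := by
  rintro rfl; exact ha rfl

theorem Move.sum_eq_pos_add_neg_add (j : Fin d) (g : Move d → ℝ) :
    ∑ b, g b = g (Move.pos j) + g (Move.neg j) + ∑ b ∈ univ.filter (fun b => b.dir ≠ j), g b := by
  rw [← sum_filter_add_sum_filter_not univ fun b : Move d => b.dir = j]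
  congr 1
  rw [show univ.filter (fun b : Move d => b.dir = j) = {Move.pos j, Move.neg j} by
    ext b; cases b <;> simp [Move.dir, eq_comm]]
  simp

theorem kplus_le_rate : kplus d K h σ N V i j ≤ rate d K h σ N V i (Move.pos j) := by
  unfold kplus
  linarith [(rate_nonneg _ _ : 0 ≤ rate d K h σ N V ((Move.pos j).act h i) (Move.pos j)),
    sum_max_sub_nonneg (univ.filter fun γ : Move d => γ.dir ≠ j)
      (rate d K h σ N V ((Move.pos j).act h i)) (rate d K h σ N V i)]

theorem kminus_le_rate : kminus d K h σ N V i j ≤ rate d K h σ N V i (Move.neg j) := by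
  unfold kminus
  linarith [(rate_nonneg _ _ : 0 ≤ rate d K h σ N V ((Move.neg j).act h i) (Move.neg j)),
    sum_max_sub_nonneg (univ.filter fun γ : Move d => γ.dir ≠ j)
      (rate d K h σ N V ((Move.neg j).act h i)) (rate d K h σ N V i)]

variable (hA3 : A3 d K h σ N V) (hi : i ∈ grid d K h N)
  (hi' : (Move.pos j).act h i ∈ grid d K h N)
include hA3 hi hi'

theorem kplus_pos : 0 < kplus d K h σ N V i j := hA3.1 j i hi hi'

theorem kminus_act_pos : 0 < kminus d K h σ N V ((Move.pos j).act h i) j :=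
  hA3.2 j _ hi' (by rwa [Move.act_neg_act_pos])

theorem rate_act_pos_le :
    rate d K h σ N V ((Move.pos j).act h i) (Move.pos j) ≤ rate d K h σ N V i (Move.pos j) := by
  have := kplus_pos hA3 hi hi'
  unfold kplus at this
  linarith [sum_max_sub_nonneg (univ.filter fun γ : Move d => γ.dir ≠ j)
    (rate d K h σ N V ((Move.pos j).act h i)) (rate d K h σ N V i)]

theorem rate_neg_le_act :
    rate d K h σ N V i (Move.neg j) ≤ rate d K h σ N V ((Move.pos j).act h i) (Move.neg j) := by
  have := kminus_act_pos hA3 hi hi'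
  rw [kminus, Move.act_neg_act_pos] at this
  linarith [sum_max_sub_nonneg (univ.filter fun γ : Move d => γ.dir ≠ j)
    (rate d K h σ N V i) (rate d K h σ N V ((Move.pos j).act h i))]

theorem sum_crate_some_left (a : Move d) :
    ∑ o', crate d K h σ N V i j (some a) o' = rate d K h σ N V i a := by
  rw [Fintype.sum_option, Move.sum_eq_pos_add_neg_add j]
  obtain rfl | rfl | ha : a = Move.pos j ∨ a = Move.neg j ∨ a.dir ≠ j := by
    cases a <;> simp [eq_comm, em]
  · rw [sum_congr rfl fun b hb => show crate d K h σ N V i j (some (Move.pos j)) (some b) =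
      max (rate d K h σ N V ((Move.pos j).act h i) b - rate d K h σ N V i b) 0 by
        simp [crate, (mem_filter.1 hb).2, (Move.ne_pos_of_dir_ne (mem_filter.1 hb).2).symm]]
    simp [crate, min_eq_right (rate_act_pos_le hA3 hi hi'), kplus]
  · rw [sum_eq_zero fun b hb => show crate d K h σ N V i j (some (Move.neg j)) (some b) = 0 by
        simp [crate, (mem_filter.1 hb).2, (Move.ne_neg_of_dir_ne (mem_filter.1 hb).2).symm]]
    simp [crate, min_eq_left (rate_neg_le_act hA3 hi hi')]
  · rw [sum_congr rfl fun b hb => show crate d K h σ N V i j (some a) (some b) =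
      if a = b then min (rate d K h σ N V i a) (rate d K h σ N V ((Move.pos j).act h i) a) else 0 by
        simp [crate, Move.ne_neg_of_dir_ne (mem_filter.1 hb).2, Move.ne_pos_of_dir_ne ha]]
    simp [crate, ha, Move.ne_neg_of_dir_ne ha, Move.ne_pos_of_dir_ne ha, max_sub_zero_add_min]

theorem sum_crate_some_right (b : Move d) :
    ∑ o, crate d K h σ N V i j o (some b) = rate d K h σ N V ((Move.pos j).act h i) b := by
  rw [Fintype.sum_option, Move.sum_eq_pos_add_neg_add j]
  obtain rfl | rfl | hb : b = Move.pos j ∨ b = Move.neg j ∨ b.dir ≠ j := by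
    cases b <;> simp [eq_comm, em]
  · rw [sum_eq_zero fun a ha => show crate d K h σ N V i j (some a) (some (Move.pos j)) = 0 by
        simp [crate, Move.ne_pos_of_dir_ne (mem_filter.1 ha).2]]
    simp [crate, min_eq_right (rate_act_pos_le hA3 hi hi')]
  · rw [sum_congr rfl fun a ha => show crate d K h σ N V i j (some a) (some (Move.neg j)) =
      max (rate d K h σ N V i a - rate d K h σ N V ((Move.pos j).act h i) a) 0 by
        simp [crate, (mem_filter.1 ha).2, Move.ne_neg_of_dir_ne (mem_filter.1 ha).2,
          Move.ne_pos_of_dir_ne (mem_filter.1 ha).2]]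
    simp [crate, min_eq_left (rate_neg_le_act hA3 hi hi'), kminus, Move.act_neg_act_pos]
  · rw [sum_congr rfl fun a ha => show crate d K h σ N V i j (some a) (some b) =
      if a = b then min (rate d K h σ N V i a) (rate d K h σ N V ((Move.pos j).act h i) a) else 0 by
        simp [crate, Move.ne_pos_of_dir_ne (mem_filter.1 ha).2, Move.ne_neg_of_dir_ne hb]]
    simp [crate, hb, Move.ne_neg_of_dir_ne hb, (Move.ne_neg_of_dir_ne hb).symm,
      (Move.ne_pos_of_dir_ne hb).symm, min_comm (rate d K h σ N V i b), max_sub_zero_add_min]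

theorem crate_nonneg (o o' : Option (Move d)) : 0 ≤ crate d K h σ N V i j o o' := by
  have := kplus_pos hA3 hi hi'
  have := kminus_act_pos hA3 hi hi'
  rcases o with _ | a <;> rcases o' with _ | b <;> simp only [crate] <;> try split_ifs
  all_goals first | positivity | exact le_min (rate_nonneg _ _) (rate_nonneg _ _)

omit hA3 hi hi' in
theorem sum_crate_none_left :
    ∑ o', crate d K h σ N V i j none o' = kminus d K h σ N V ((Move.pos j).act h i) j := by
  simp [crate, Fintype.sum_option]

theorem sum_sum_crate_le :
    ∑ o, ∑ o', crate d K h σ N V i j o o' ≤ Tcal d K h σ N V := by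
  rw [Fintype.sum_option, sum_crate_none_left,
    sum_congr rfl fun a _ => sum_crate_some_left hA3 hi hi' a]
  linarith [(kminus_le_rate : kminus d K h σ N V ((Move.pos j).act h i) j ≤ _),
    rate_le (σ := σ) (V := V) hi' (Move.neg j), sum_rate_le (σ := σ) (V := V) hi]

end CouplingRates

section Kappa

variable {d : ℕ} {K h σ : ℝ} {N : ℕ} {V : Pt d → ℝ}

theorem bddBelow_kappaPhi_set (hA3 : A3 d K h σ N V) :
    BddBelow {r : ℝ | ∃ j : Fin d, ∃ i ∈ grid d K h N, (Move.pos j).act h i ∈ grid d K h N ∧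
      r = kplus d K h σ N V i j + kminus d K h σ N V ((Move.pos j).act h i) j} := by
  refine ⟨0, ?_⟩
  rintro _ ⟨j, i, hi, hi', rfl⟩
  exact add_nonneg (kplus_pos hA3 hi hi').le (kminus_act_pos hA3 hi hi').le

theorem kappaPhi_le (hA3 : A3 d K h σ N V) (hi : i ∈ grid d K h N)
    (hi' : (Move.pos j).act h i ∈ grid d K h N) :
    kappaPhi d K h σ N V ≤ kplus d K h σ N V i j + kminus d K h σ N V ((Move.pos j).act h i) j :=
  csInf_le (bddBelow_kappaPhi_set hA3) ⟨j, i, hi, hi', rfl⟩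

theorem kappaPhi_mul_tauStep_le_one (hA3 : A3 d K h σ N V) :
    kappaPhi d K h σ N V * tauStep d K h σ N V ≤ 1 := by
  rw [tauStep, mul_one_div]
  refine div_le_one_of_le₀ ?_ Tcal_nonneg
  obtain hS | ⟨_, j, i, hi, hi', rfl⟩ := Set.eq_empty_or_nonempty
    {r : ℝ | ∃ j : Fin d, ∃ i ∈ grid d K h N, (Move.pos j).act h i ∈ grid d K h N ∧
      r = kplus d K h σ N V i j + kminus d K h σ N V ((Move.pos j).act h i) j}
  · rw [kappaPhi, hS, Real.sInf_empty]
    exact Tcal_nonneg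
  · linarith [kappaPhi_le hA3 hi hi', (kplus_le_rate : kplus d K h σ N V i j ≤ _),
      (kminus_le_rate : kminus d K h σ N V ((Move.pos j).act h i) j ≤ _),
      rate_le (σ := σ) (V := V) hi (Move.pos j), rate_le (σ := σ) (V := V) hi' (Move.neg j)]

end Kappa

section NeighborCoupling

variable {d : ℕ} {K h σ : ℝ} {N : ℕ} {V : Pt d → ℝ} {i : Pt d} {j : Fin d}

theorem pcoup_eq_lazyJoint :
    pcoup d K h σ N V i j = lazyJoint (crate d K h σ N V i j) (Tcal d K h σ N V) :=
  rfl

theorem graphDist_act_act_of_crate_ne_zero (hh : 0 < h) {a b : Move d}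
    (hab : crate d K h σ N V i j (some a) (some b) ≠ 0) :
    graphDist (a.act h i) (b.act h ((Move.pos j).act h i)) = h := by
  simp only [crate] at hab
  split_ifs at hab with h₁ h₂ h₃
  · rw [h₁, graphDist_act_act, graphDist_act_right, abs_of_pos hh]
  · rw [h₂.1, graphDist_act_right, abs_of_pos hh]
  · rw [h₃.2, Move.act_neg_act_pos, graphDist_comm, graphDist_act_right, abs_of_pos hh]
  · exact absurd rfl hab

/-- Only the two moves `(+ⱼ, e)` and `(e, -ⱼ)` merge the walkers; all others keep distance `h`. -/
theorem graphDist_mul_pcoup (hh : 0 < h) (q : Option (Move d) × Option (Move d)) :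
    graphDist (actO h q.1 i) (actO h q.2 ((Move.pos j).act h i)) * pcoup d K h σ N V i j q
      = h * pcoup d K h σ N V i j q
        - (if q = (some (Move.pos j), none) then h * pcoup d K h σ N V i j q else 0)
        - (if q = (none, some (Move.neg j)) then h * pcoup d K h σ N V i j q else 0) := by
  rcases q with ⟨_ | a, _ | b⟩
  · simp [actO, graphDist_act_right, abs_of_pos hh]
  · by_cases hb : b = Move.neg j
    · simp [hb, actO, Move.act_neg_act_pos, graphDist_self]
    · simp [hb, pcoup_eq_lazyJoint, lazyJoint_of_ne, crate]
  · by_cases ha : a = Move.pos j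
    · simp [ha, actO, graphDist_self]
    · simp [ha, pcoup_eq_lazyJoint, lazyJoint_of_ne, crate]
  · by_cases hab : crate d K h σ N V i j (some a) (some b) = 0
    · simp [pcoup_eq_lazyJoint, lazyJoint_of_ne, hab]
    · simp [actO, graphDist_act_act_of_crate_ne_zero hh hab]

noncomputable def neighborCoupling (d : ℕ) (K h σ : ℝ) (N : ℕ) (V : Pt d → ℝ) (i : Pt d)
    (j : Fin d) : Pt d → Pt d → ℝ :=
  pushCoupling (fun q => actO h q.1 i) (fun q => actO h q.2 ((Move.pos j).act h i))
    (pcoup d K h σ N V i j)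

variable (hA3 : A3 d K h σ N V) (hi : i ∈ grid d K h N)
  (hi' : (Move.pos j).act h i ∈ grid d K h N)
include hA3 hi hi'

theorem sum_pcoup_fst (o : Option (Move d)) :
    ∑ o', pcoup d K h σ N V i j (o, o') = lazyStep (rate d K h σ N V i) (Tcal d K h σ N V) o :=
  sum_lazyJoint_fst _ rfl (sum_crate_some_left hA3 hi hi') o

theorem sum_pcoup_snd (o' : Option (Move d)) :
    ∑ o, pcoup d K h σ N V i j (o, o')
      = lazyStep (rate d K h σ N V ((Move.pos j).act h i)) (Tcal d K h σ N V) o' :=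
  sum_lazyJoint_snd _ rfl (sum_crate_some_right hA3 hi hi') o'

theorem pcoup_nonneg (q : Option (Move d) × Option (Move d)) : 0 ≤ pcoup d K h σ N V i j q :=
  lazyJoint_nonneg (crate_nonneg hA3 hi hi') rfl Tcal_nonneg (sum_sum_crate_le hA3 hi hi') q

theorem mem_grid_of_pcoup_ne_zero {q : Option (Move d) × Option (Move d)}
    (hq : pcoup d K h σ N V i j q ≠ 0) :
    actO h q.1 i ∈ grid d K h N ∧ actO h q.2 ((Move.pos j).act h i) ∈ grid d K h N := by
  obtain ⟨o, o'⟩ := q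
  have hp := pcoup_nonneg hA3 hi hi'
  refine ⟨mem_grid_of_lazyStep_ne_zero (σ := σ) (V := V) hi ?_,
    mem_grid_of_lazyStep_ne_zero (σ := σ) (V := V) hi' ?_⟩
  · rw [← sum_pcoup_fst hA3 hi hi']
    exact fun h0 => hq ((sum_eq_zero_iff_of_nonneg fun o' _ => hp (o, o')).1 h0 o' (mem_univ _))
  · rw [← sum_pcoup_snd hA3 hi hi']
    exact fun h0 => hq ((sum_eq_zero_iff_of_nonneg fun o _ => hp (o, o')).1 h0 o (mem_univ _))

theorem isCoupling_neighborCoupling :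
    IsCoupling (grid d K h N) (piKernel d K h σ N V i)
      (piKernel d K h σ N V ((Move.pos j).act h i)) (neighborCoupling d K h σ N V i j) := by
  refine isCoupling_pushCoupling (pcoup_nonneg hA3 hi hi')
    (fun q => mem_grid_of_pcoup_ne_zero hA3 hi hi') (fun x _ => ?_) (fun y _ => ?_)
  · rw [piKernel_eq_sum, Fintype.sum_prod_type]
    refine sum_congr rfl fun o _ => ?_
    split_ifs <;> simp [*, sum_pcoup_fst hA3 hi hi']
  · rw [piKernel_eq_sum, Fintype.sum_prod_type_right]
    refine sum_congr rfl fun o' _ => ?_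
    split_ifs <;> simp [*, sum_pcoup_snd hA3 hi hi']

theorem couplingCost_neighborCoupling_le (hh : 0 < h) :
    couplingCost (grid d K h N) graphDist (neighborCoupling d K h σ N V i j)
      ≤ (1 - kappaPhi d K h σ N V * tauStep d K h σ N V) * h := by
  have hsum : ∑ q, pcoup d K h σ N V i j q = 1 := by
    rw [Fintype.sum_prod_type, sum_congr rfl fun o _ => sum_pcoup_fst hA3 hi hi' o, sum_lazyStep]
  have hκτ : kappaPhi d K h σ N V * tauStep d K h σ N V
      ≤ pcoup d K h σ N V i j (some (Move.pos j), none)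
        + pcoup d K h σ N V i j (none, some (Move.neg j)) := by
    rw [pcoup_eq_lazyJoint, lazyJoint_of_ne (by simp), lazyJoint_of_ne (by simp)]
    simp only [crate, if_true]
    rw [← add_div, tauStep, mul_one_div]
    exact div_le_div_of_nonneg_right (kappaPhi_le hA3 hi hi') Tcal_nonneg
  rw [neighborCoupling, couplingCost_pushCoupling fun q => mem_grid_of_pcoup_ne_zero hA3 hi hi',
    sum_congr rfl fun q _ => graphDist_mul_pcoup hh q, sum_sub_distrib, sum_sub_distrib,
    ← mul_sum, hsum, sum_ite_eq', sum_ite_eq', if_pos (mem_univ _), if_pos (mem_univ _)]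
  nlinarith

end NeighborCoupling

section Contraction

variable {d : ℕ} {K h σ : ℝ} {N : ℕ} {V : Pt d → ℝ}

theorem IsProbOn.exists_coupling {ν η : Pt d → ℝ} (hν : IsProbOn d K h N ν)
    (hη : IsProbOn d K h N η) : ∃ Γ, IsCoupling (grid d K h N) ν η Γ :=
  ⟨_, isCoupling_mul hν.1 hη.1 hν.2 hη.2⟩

theorem Wd1_nonneg {ν η : Pt d → ℝ} : 0 ≤ Wd1 d K h N ν η := by
  rw [Wd1, Wgen_eq_transportCost]
  exact transportCost_nonneg (fun x _ y _ => graphDist_nonneg x y) ν η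

theorem Wd1_piMeas_le (hh : 0 < h) (hA3 : A3 d K h σ N V) {ν η : Pt d → ℝ}
    (hν : IsProbOn d K h N ν) (hη : IsProbOn d K h N η) :
    Wd1 d K h N (piMeas d K h σ N V ν) (piMeas d K h σ N V η)
      ≤ (1 - kappaPhi d K h σ N V * tauStep d K h σ N V) * Wd1 d K h N ν η := by
  simp only [Wd1, Wgen_eq_transportCost]
  exact transportCost_kernel_le (sub_nonneg.2 (kappaPhi_mul_tauStep_le_one hA3))
    (fun x _ y _ => graphDist_nonneg x y)
    (fun x hx y hy => exists_coupling_of_adjacent hh (fun x hx k _ => piKernel_nonneg hx k)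
      (fun x hx _ hx' => ⟨_, isCoupling_neighborCoupling hA3 hx hx',
        couplingCost_neighborCoupling_le hA3 hx hx' hh⟩) hx hy)
    (hν.exists_coupling hη) (fun k hk => by rw [piMeas, if_pos hk])
    (fun k hk => by rw [piMeas, if_pos hk])

theorem norm_sub_le_graphDist (x y : Pt d) : ‖x - y‖ ≤ graphDist x y := by
  refine (sq_le_sq₀ (norm_nonneg _) (graphDist_nonneg x y)).1 ?_
  rw [EuclideanSpace.norm_sq_eq, graphDist]
  simpa using sum_sq_le_sq_sum_of_nonneg fun j _ => abs_nonneg (x j - y j)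

theorem graphDist_le_sqrt_mul_norm_sub (x y : Pt d) : graphDist x y ≤ √d * ‖x - y‖ := by
  refine (sq_le_sq₀ (graphDist_nonneg x y) (by positivity)).1 ?_
  rw [mul_pow, Real.sq_sqrt d.cast_nonneg, EuclideanSpace.norm_sq_eq, graphDist]
  simpa using sq_sum_le_card_mul_sum_sq (s := univ) (f := fun j => |x j - y j|)

theorem W1_le_Wd1 {ν η : Pt d → ℝ} (hν : IsProbOn d K h N ν) (hη : IsProbOn d K h N η) :
    W1 d K h N ν η ≤ Wd1 d K h N ν η := by
  simpa [W1, Wd1, Wgen_eq_transportCost] using transportCost_le_mul zero_le_one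
    (fun x _ y _ => norm_nonneg (x - y)) (fun x _ y _ => by simpa using norm_sub_le_graphDist x y)
    (hν.exists_coupling hη)

theorem Wd1_le_sqrt_mul_W1 {ν η : Pt d → ℝ} (hν : IsProbOn d K h N ν)
    (hη : IsProbOn d K h N η) : Wd1 d K h N ν η ≤ √d * W1 d K h N ν η := by
  simpa [W1, Wd1, Wgen_eq_transportCost] using transportCost_le_mul (Real.sqrt_nonneg d)
    (fun x _ y _ => graphDist_nonneg x y) (fun x _ y _ => graphDist_le_sqrt_mul_norm_sub x y)
    (hν.exists_coupling hη)

end Contraction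

/-- Exponential contraction in Wasserstein distance for the discrete-time scheme
(Theorem 4.3). -/
theorem wasserstein_contraction_discrete_time
    (d : ℕ) (K h σ : ℝ) (N : ℕ) (V : Pt d → ℝ) (hp : Params d K h σ N V)
    (hA3 : A3 d K h σ N V)
    (ν η : Pt d → ℝ) (hν : IsProbOn d K h N ν) (hη : IsProbOn d K h N η) (n : ℕ) :
    Wd1 d K h N ((piMeas d K h σ N V)^[n] ν) ((piMeas d K h σ N V)^[n] η)
      ≤ Real.exp (-(kappaPhi d K h σ N V) * n * tauStep d K h σ N V)
          * Wd1 d K h N ν η ∧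
    W1 d K h N ((piMeas d K h σ N V)^[n] ν) ((piMeas d K h σ N V)^[n] η)
      ≤ Real.sqrt d * Real.exp (-(kappaPhi d K h σ N V) * n * tauStep d K h σ N V)
          * W1 d K h N ν η := by
  obtain ⟨-, -, hh, -, -, -⟩ := hp
  set κτ := kappaPhi d K h σ N V * tauStep d K h σ N V
  have hc : 0 ≤ 1 - κτ := sub_nonneg.2 (kappaPhi_mul_tauStep_le_one hA3)
  have hexp : (1 - κτ) ^ n ≤ Real.exp (-(kappaPhi d K h σ N V) * n * tauStep d K h σ N V) :=
    calc (1 - κτ) ^ n ≤ Real.exp (-κτ) ^ n := pow_le_pow_left₀ hc (Real.one_sub_le_exp_neg κτ) n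
      _ = _ := by rw [← Real.exp_nat_mul]; simp only [κτ]; ring_nf
  have hprob : ∀ {μ}, IsProbOn d K h N μ →
      IsProbOn d K h N ((piMeas d K h σ N V)^[n] μ) := fun hμ =>
    Function.Iterate.rec _ hμ (fun _ => isProbOn_piMeas) n
  have hWd1 := (iterate_le_pow_mul hc (fun _ => isProbOn_piMeas)
    (fun _ _ => Wd1_piMeas_le hh hA3) n hν hη).trans
    (mul_le_mul_of_nonneg_right hexp Wd1_nonneg)
  refine ⟨hWd1, ?_⟩
  calc W1 d K h N ((piMeas d K h σ N V)^[n] ν) ((piMeas d K h σ N V)^[n] η)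
      ≤ Wd1 d K h N ((piMeas d K h σ N V)^[n] ν) ((piMeas d K h σ N V)^[n] η) :=
        W1_le_Wd1 (hprob hν) (hprob hη)
    _ ≤ Real.exp (-(kappaPhi d K h σ N V) * n * tauStep d K h σ N V) * (√d * W1 d K h N ν η) :=
        hWd1.trans (mul_le_mul_of_nonneg_left (Wd1_le_sqrt_mul_W1 hν hη) (Real.exp_pos _).le)
    _ = _ := by ring
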